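/- Let n ≥ 2, s > 0 and 0 < τ ≤ s. There exists a constant C = C(n, τ) > 0 such that for all integers k ≥ 3, all reals r > 1 and every x ∈ ℝⁿ, one has Σ_{i=1}^k ⟨x−P^i⟩^{-s} − d(x)^{-s} ≤ C k (k/r)^{τ} d(x)^{-s+τ}. -/

import Mathlib

open Real Finset

/-- `⟨x⟩ := (1 + |x|²)^{1/2}`. -/
noncomputable def jap {n : ℕ} (x : EuclideanSpace ℝ (Fin n)) : ℝ :=
  Real.sqrt (1 + ‖x‖ ^ 2)

/-- The points `P^j := (r cos(2π(j−1)/k), r sin(2π(j−1)/k), 0, …, 0) ∈ ℝⁿ`. -/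
noncomputable def pts (n k : ℕ) (r : ℝ) (j : ℕ) : EuclideanSpace ℝ (Fin n) :=
  WithLp.toLp 2 (fun i : Fin n => if (i : ℕ) = 0 then r * Real.cos (2 * Real.pi * ((j : ℝ) - 1) / k)
  else if (i : ℕ) = 1 then r * Real.sin (2 * Real.pi * ((j : ℝ) - 1) / k)
  else 0)

/-- `d(x) := min_{1 ≤ j ≤ k} ⟨x − P^j⟩`. -/
noncomputable def dmin (n k : ℕ) (r : ℝ) (x : EuclideanSpace ℝ (Fin n)) : ℝ :=
  ⨅ j : Fin k, jap (x - pts n k r (j.1 + 1))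

lemma one_le_jap {n : ℕ} (x : EuclideanSpace ℝ (Fin n)) : 1 ≤ jap x := by
  have h := Real.sqrt_le_sqrt (show (1:ℝ) ≤ 1 + ‖x‖ ^ 2 by nlinarith [sq_nonneg ‖x‖])
  simpa [jap] using h


lemma norm_le_jap {n : ℕ} (x : EuclideanSpace ℝ (Fin n)) : ‖x‖ ≤ jap x := by
  have h1 := Real.sq_sqrt (show (0:ℝ) ≤ 1 + ‖x‖ ^ 2 by positivity)
  have h2 := Real.sqrt_nonneg (1 + ‖x‖ ^ 2)
  rw [jap]
  nlinarith [norm_nonneg x]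

lemma sin_lb (k m : ℕ) (hk : 3 ≤ k) (hm1 : 1 ≤ m) (hm2 : m + 1 ≤ k) :
    2 / k ≤ Real.sin (π * m / k) := by
  have hπ := Real.pi_pos
  have hk0 : (0:ℝ) < k := by positivity
  have hk3 : (3:ℝ) ≤ k := by exact_mod_cast hk
  have key : ∀ θ : ℝ, π / k ≤ θ → θ ≤ π / 2 → 2 / k ≤ Real.sin θ := by
    intro θ h1 h2
    have hπk : (0:ℝ) < π / k := by positivity
    have h3 : 2 / π * (π / k) ≤ Real.sin (π / k) :=
      Real.mul_le_sin (by positivity) (h1.trans h2)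
    have h4 : Real.sin (π / k) ≤ Real.sin θ :=
      Real.strictMonoOn_sin.monotoneOn ⟨by linarith, by linarith⟩ ⟨by linarith, h2⟩ h1
    have h5 : 2 / π * (π / k) = 2 / k := by field_simp
    linarith
  have hm1' : (1:ℝ) ≤ m := by exact_mod_cast hm1
  have hm2' : (m:ℝ) ≤ (k:ℝ) - 1 := by
    have : (m:ℝ) + 1 ≤ k := by exact_mod_cast hm2
    linarith
  have hθ1 : π / k ≤ π * m / k := by
    gcongr
    nlinarith
  rcases le_or_gt (π * m / k) (π / 2) with h | h
  · exact key _ hθ1 h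
  · have heq : Real.sin (π * m / k) = Real.sin (π - π * m / k) := (Real.sin_pi_sub _).symm
    rw [heq]
    apply key
    · rw [le_sub_iff_add_le, ← add_div, div_le_iff₀ hk0]
      nlinarith
    · linarith

lemma pts_sep {n k : ℕ} (hn : 2 ≤ n) (hk : 3 ≤ k) {r : ℝ} (hr : 0 < r)
    {a b : ℕ} (ha : a ∈ Finset.Icc 1 k) (hb : b ∈ Finset.Icc 1 k) (hab : a ≠ b) :
    4 * r / k ≤ ‖pts n k r a - pts n k r b‖ := by
  simp only [Finset.mem_Icc] at ha hb
  have hk0 : (0:ℝ) < k := by positivity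
  set A := 2 * π * ((a:ℝ) - 1) / k with hA
  set B := 2 * π * ((b:ℝ) - 1) / k with hB
  have hi0 : (0:ℕ) < n := by omega
  have hi1 : (1:ℕ) < n := by omega
  have hsum : ∑ i : Fin n, ‖(pts n k r a - pts n k r b) i‖ ^ 2
      = (r * Real.cos A - r * Real.cos B) ^ 2 + (r * Real.sin A - r * Real.sin B) ^ 2 := by
    rw [← Finset.sum_subset (Finset.subset_univ ({⟨0, hi0⟩, ⟨1, hi1⟩} : Finset (Fin n)))]
    · rw [Finset.sum_pair (show (⟨0, hi0⟩ : Fin n) ≠ ⟨1, hi1⟩ by simp [Fin.ext_iff])]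
      simp [pts, PiLp.sub_apply, sq_abs, Real.norm_eq_abs, hA, hB]
    · intro i _ hi
      simp only [Finset.mem_insert, Finset.mem_singleton, Fin.ext_iff] at hi
      push_neg at hi
      simp [pts, PiLp.sub_apply, hi.1, hi.2]
  have htrig : (r * Real.cos A - r * Real.cos B) ^ 2 + (r * Real.sin A - r * Real.sin B) ^ 2
      = 2 * r ^ 2 * (1 - Real.cos (A - B)) := by
    rw [Real.cos_sub]
    linear_combination r ^ 2 * Real.sin_sq_add_cos_sq A + r ^ 2 * Real.sin_sq_add_cos_sq B
  have hhalf : Real.sin ((A - B) / 2) ^ 2 = (1 - Real.cos (A - B)) / 2 := by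
    rw [Real.sin_sq, Real.cos_sq, show 2 * ((A - B) / 2) = A - B by ring]; ring
  have habk : (A - B) / 2 = π * ((a:ℝ) - b) / k := by
    rw [hA, hB]; field_simp; ring
  have hS : ∑ i : Fin n, ‖(pts n k r a - pts n k r b) i‖ ^ 2
      = 4 * r ^ 2 * Real.sin (π * ((a:ℝ) - b) / k) ^ 2 := by
    rw [hsum, htrig, ← habk]
    linear_combination (-(4 * r ^ 2)) * hhalf
  have key : ∀ m : ℕ, 1 ≤ m → m + 1 ≤ k → (2 / (k:ℝ)) ^ 2 ≤ Real.sin (π * m / k) ^ 2 := by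
    intro m h1 h2
    have h3 := sin_lb k m hk h1 h2
    have h4 : (0:ℝ) ≤ 2 / k := by positivity
    nlinarith
  have hsin : (2 / (k:ℝ)) ^ 2 ≤ Real.sin (π * ((a:ℝ) - b) / k) ^ 2 := by
    rcases lt_or_gt_of_ne hab with h | h
    · have hm : ((a:ℝ) - b) = -(((b - a : ℕ)):ℝ) := by
        push_cast [h.le]; ring
      rw [hm, show π * (-(((b - a : ℕ)):ℝ)) / k = -(π * ((b - a : ℕ):ℝ) / k) by ring,
        Real.sin_neg, neg_sq]
      exact key _ (by omega) (by omega)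
    · have hm : ((a:ℝ) - b) = ((a - b : ℕ):ℝ) := by push_cast [h.le]; ring
      rw [hm]
      exact key _ (by omega) (by omega)
  rw [EuclideanSpace.norm_eq]
  rw [Real.le_sqrt (by positivity) (Finset.sum_nonneg fun i _ => sq_nonneg _)]
  rw [hsum] at hS ⊢
  rw [hS, div_pow]
  rw [div_le_iff₀ (by positivity)]
  have : (4 * r) ^ 2 = 4 * r ^ 2 * (2 / (k:ℝ)) ^ 2 * (k:ℝ) ^ 2 := by
    field_simp; ring
  rw [this]
  have h4r : (0:ℝ) < 4 * r ^ 2 := by positivity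
  nlinarith [mul_le_mul_of_nonneg_right (mul_le_mul_of_nonneg_left hsin h4r.le) (sq_nonneg ((k:ℝ)))]

/-- Let `n ≥ 2`, `s > 0` and `0 < τ ≤ s`. There exists `C = C(n, τ) > 0` such that for all
integers `k ≥ 3`, all reals `r > 1` and every `x ∈ ℝⁿ`,
`Σ_{i=1}^k ⟨x−P^i⟩^{-s} − d(x)^{-s} ≤ C k (k/r)^τ d(x)^{-s+τ}`. -/
theorem stmt2 (n : ℕ) (hn : 2 ≤ n) (s τ : ℝ) (hs : 0 < s) (hτ0 : 0 < τ) (hτ : τ ≤ s) :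
    ∃ C : ℝ, 0 < C ∧ ∀ k : ℕ, 3 ≤ k → ∀ r : ℝ, 1 < r →
      ∀ x : EuclideanSpace ℝ (Fin n),
        (∑ i ∈ Finset.Icc 1 k, jap (x - pts n k r i) ^ (-s)) - dmin n k r x ^ (-s) ≤
          C * k * ((k : ℝ) / r) ^ τ * dmin n k r x ^ (-s + τ) := by
  refine ⟨1, one_pos, fun k hk r hr x => ?_⟩
  have hk0 : (0:ℝ) < k := by positivity
  have hr0 : (0:ℝ) < r := by linarith
  haveI : Nonempty (Fin k) := ⟨⟨0, by omega⟩⟩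
  have hbdd : BddBelow (Set.range fun j : Fin k => jap (x - pts n k r (j.1 + 1))) := by
    refine ⟨1, ?_⟩
    rintro y ⟨j, rfl⟩
    exact one_le_jap _
  have hd1 : 1 ≤ dmin n k r x := le_ciInf fun j => one_le_jap _
  have hdpos : (0:ℝ) < dmin n k r x := lt_of_lt_of_le one_pos hd1
  have hdle : ∀ i ∈ Finset.Icc 1 k, dmin n k r x ≤ jap (x - pts n k r i) := by
    intro i hi
    rw [Finset.mem_Icc] at hi
    have h := ciInf_le hbdd ⟨i - 1, by omega⟩
    simpa [dmin, show i - 1 + 1 = i by omega] using h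
  obtain ⟨j0, hj0⟩ :=
    exists_eq_ciInf_of_finite (f := fun j : Fin k => jap (x - pts n k r (j.1 + 1)))
  set i0 := j0.1 + 1 with hi0def
  have hi0mem : i0 ∈ Finset.Icc 1 k := by
    rw [Finset.mem_Icc]
    have := j0.2
    omega
  have hdmin_eq : dmin n k r x = jap (x - pts n k r i0) := hj0.symm
  have hsplit : ∑ i ∈ Finset.Icc 1 k, jap (x - pts n k r i) ^ (-s)
      = jap (x - pts n k r i0) ^ (-s)
        + ∑ i ∈ (Finset.Icc 1 k).erase i0, jap (x - pts n k r i) ^ (-s) :=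
    (Finset.add_sum_erase _ _ hi0mem).symm
  set B : ℝ := ((k:ℝ) / r) ^ τ * dmin n k r x ^ (-s + τ) with hB
  have hBnn : 0 ≤ B := by positivity
  have hbound : ∀ i ∈ (Finset.Icc 1 k).erase i0, jap (x - pts n k r i) ^ (-s) ≤ B := by
    intro i hi
    obtain ⟨hne, hmem⟩ := Finset.mem_erase.mp hi
    have hsep := pts_sep hn hk hr0 hmem hi0mem hne
    have h1 : ‖x - pts n k r i‖ ≤ jap (x - pts n k r i) := norm_le_jap _
    have h2 : ‖x - pts n k r i0‖ ≤ jap (x - pts n k r i) := by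
      calc ‖x - pts n k r i0‖ ≤ jap (x - pts n k r i0) := norm_le_jap _
        _ = dmin n k r x := hdmin_eq.symm
        _ ≤ _ := hdle i hmem
    have htri : ‖pts n k r i - pts n k r i0‖ ≤ ‖x - pts n k r i‖ + ‖x - pts n k r i0‖ := by
      have h := dist_triangle (pts n k r i) x (pts n k r i0)
      simpa [dist_eq_norm, norm_sub_rev] using h
    have hfar : 2 * r / k ≤ jap (x - pts n k r i) := by
      have h4 : 4 * r / k = 2 * (2 * r / k) := by ring
      linarith
    have hjpos : (0:ℝ) < jap (x - pts n k r i) := lt_of_lt_of_le one_pos (one_le_jap _)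
    have e1 : jap (x - pts n k r i) ^ (-s)
        = jap (x - pts n k r i) ^ (-τ) * jap (x - pts n k r i) ^ (τ - s) := by
      rw [← Real.rpow_add hjpos, show -τ + (τ - s) = -s by ring]
    have e2 : jap (x - pts n k r i) ^ (-τ) ≤ (2 * r / (k:ℝ)) ^ (-τ) :=
      Real.rpow_le_rpow_of_nonpos (by positivity) hfar (by linarith)
    have e3 : (2 * r / (k:ℝ)) ^ (-τ) ≤ ((k:ℝ) / r) ^ τ := by
      rw [Real.rpow_neg (by positivity), ← Real.inv_rpow (by positivity), inv_div]
      apply Real.rpow_le_rpow (by positivity) ?_ hτ0.le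
      gcongr
      linarith
    have e4 : jap (x - pts n k r i) ^ (τ - s) ≤ dmin n k r x ^ (τ - s) :=
      Real.rpow_le_rpow_of_nonpos hdpos (hdle i hmem) (by linarith)
    calc jap (x - pts n k r i) ^ (-s)
        = jap (x - pts n k r i) ^ (-τ) * jap (x - pts n k r i) ^ (τ - s) := e1
      _ ≤ ((k:ℝ) / r) ^ τ * dmin n k r x ^ (τ - s) := by
          apply mul_le_mul (e2.trans e3) e4 (Real.rpow_nonneg hjpos.le _) (by positivity)
      _ = B := by rw [hB, show τ - s = -s + τ by ring]
  have hsum2 : ∑ i ∈ (Finset.Icc 1 k).erase i0, jap (x - pts n k r i) ^ (-s)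
      ≤ ((Finset.Icc 1 k).erase i0).card • B :=
    Finset.sum_le_card_nsmul _ _ _ hbound
  have hcard : ((Finset.Icc 1 k).erase i0).card = k - 1 := by
    rw [Finset.card_erase_of_mem hi0mem, Nat.card_Icc]
    omega
  have hcard' : (((Finset.Icc 1 k).erase i0).card : ℝ) ≤ k := by
    rw [hcard]
    exact_mod_cast Nat.sub_le k 1
  have hfin : ∑ i ∈ (Finset.Icc 1 k).erase i0, jap (x - pts n k r i) ^ (-s) ≤ (k:ℝ) * B := by
    calc ∑ i ∈ (Finset.Icc 1 k).erase i0, jap (x - pts n k r i) ^ (-s)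
        ≤ (((Finset.Icc 1 k).erase i0).card : ℝ) * B := by
          rw [← nsmul_eq_mul]; exact hsum2
      _ ≤ (k:ℝ) * B := mul_le_mul_of_nonneg_right hcard' hBnn
  rw [hsplit, ← hdmin_eq]
  calc dmin n k r x ^ (-s)
      + (∑ i ∈ (Finset.Icc 1 k).erase i0, jap (x - pts n k r i) ^ (-s))
      - dmin n k r x ^ (-s)
      = ∑ i ∈ (Finset.Icc 1 k).erase i0, jap (x - pts n k r i) ^ (-s) := by ring
    _ ≤ (k:ℝ) * B := hfin
    _ = 1 * k * ((k:ℝ) / r) ^ τ * dmin n k r x ^ (-s + τ) := by rw [hB]; ring
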